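/- arXiv:2311.06490 — 2 statements merged into one kernel-verified Lean document; each statement's English description precedes it below -/
import Mathlib

section
/- If G is a graph of order n whose minimum hop degree δ_h satisfies δ_h ≥ 1, then γ_{2step}(G) ≤ ((ln δ_h + 1)/δ_h) · n. -/
open Finset

noncomputable section
open scoped Classical

variable {n : ℕ}

/-- The set of vertices at distance exactly 2 from `i`. -/
def N2 (G : SimpleGraph (Fin n)) (i : Fin n) : Finset (Fin n) :=
  Finset.univ.filter (fun j => G.dist i j = 2)

/-- The neighborhood of `i`. -/
def Nbr (G : SimpleGraph (Fin n)) (i : Fin n) : Finset (Fin n) :=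
  Finset.univ.filter (fun j => G.Adj i j)

/-- Hop degree of a vertex. -/
def hopDeg (G : SimpleGraph (Fin n)) (i : Fin n) : ℕ := (N2 G i).card

/-- Minimum hop degree. -/
def minHopDeg (G : SimpleGraph (Fin n)) : ℕ := ⨅ i, hopDeg G i

/-- Minimum degree. -/
def minDeg (G : SimpleGraph (Fin n)) : ℕ := ⨅ i, (Nbr G i).card

def IsHopDomSet (G : SimpleGraph (Fin n)) (S : Finset (Fin n)) : Prop :=
  ∀ u, u ∉ S → ∃ v ∈ S, G.dist u v = 2

def IsTwoStepDomSet (G : SimpleGraph (Fin n)) (S : Finset (Fin n)) : Prop :=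
  ∀ u : Fin n, ∃ v ∈ S, G.dist u v = 2

def IsRestrainedHopDomSet (G : SimpleGraph (Fin n)) (S : Finset (Fin n)) : Prop :=
  IsHopDomSet G S ∧ ∀ u, u ∉ S → ∃ v, v ∉ S ∧ G.Adj u v

def IsTotalRestrainedHopDomSet (G : SimpleGraph (Fin n)) (S : Finset (Fin n)) : Prop :=
  IsTwoStepDomSet G S ∧ ∀ u, u ∉ S → ∃ v, v ∉ S ∧ G.Adj u v

def IsTwoStepRestrainedDomSet (G : SimpleGraph (Fin n)) (S : Finset (Fin n)) : Prop :=
  IsHopDomSet G S ∧ ∀ u, u ∉ S → ∃ v, v ∉ S ∧ G.dist u v = 2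

def IsTotalTwoStepRestrainedDomSet (G : SimpleGraph (Fin n)) (S : Finset (Fin n)) : Prop :=
  IsTwoStepDomSet G S ∧ ∀ u, u ∉ S → ∃ v, v ∉ S ∧ G.dist u v = 2

def hopDomNum (G : SimpleGraph (Fin n)) : ℕ :=
  sInf {k | ∃ S : Finset (Fin n), IsHopDomSet G S ∧ S.card = k}

def twoStepDomNum (G : SimpleGraph (Fin n)) : ℕ :=
  sInf {k | ∃ S : Finset (Fin n), IsTwoStepDomSet G S ∧ S.card = k}

def rhDomNum (G : SimpleGraph (Fin n)) : ℕ :=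
  sInf {k | ∃ S : Finset (Fin n), IsRestrainedHopDomSet G S ∧ S.card = k}

def trhDomNum (G : SimpleGraph (Fin n)) : ℕ :=
  sInf {k | ∃ S : Finset (Fin n), IsTotalRestrainedHopDomSet G S ∧ S.card = k}

def tsrDomNum (G : SimpleGraph (Fin n)) : ℕ :=
  sInf {k | ∃ S : Finset (Fin n), IsTwoStepRestrainedDomSet G S ∧ S.card = k}

def ttsrDomNum (G : SimpleGraph (Fin n)) : ℕ :=
  sInf {k | ∃ S : Finset (Fin n), IsTotalTwoStepRestrainedDomSet G S ∧ S.card = k}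

/-- The graph `Dist(G;2)` joining vertices at distance exactly 2 in `G`. -/
def dist2Graph (G : SimpleGraph (Fin n)) : SimpleGraph (Fin n) where
  Adj u v := u ≠ v ∧ G.dist u v = 2
  symm := by
    constructor
    intro u v h
    exact ⟨h.1.symm, by rw [SimpleGraph.dist_comm]; exact h.2⟩
  loopless := ⟨fun v h => h.1 rfl⟩

def domNum (H : SimpleGraph (Fin n)) : ℕ :=
  sInf {k | ∃ S : Finset (Fin n), (∀ u, u ∉ S → ∃ v ∈ S, H.Adj u v) ∧ S.card = k}

def totalDomNum (H : SimpleGraph (Fin n)) : ℕ :=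
  sInf {k | ∃ S : Finset (Fin n), (∀ u : Fin n, ∃ v ∈ S, H.Adj u v) ∧ S.card = k}

/-- Matching number: maximum number of edges in a matching. -/
def matchingNum (G : SimpleGraph (Fin n)) : ℕ :=
  sSup {k | ∃ M : SimpleGraph.Subgraph G, M.IsMatching ∧ M.edgeSet.ncard = k}

/-- A hop matching: a set of paths of length two, no two of which share an end vertex. -/
def IsHopMatching (G : SimpleGraph (Fin n)) (H : Finset (Fin n × Fin n × Fin n)) : Prop :=
  (∀ t ∈ H, G.Adj t.1 t.2.1 ∧ G.Adj t.2.1 t.2.2 ∧ t.1 ≠ t.2.2) ∧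
  ∀ t ∈ H, ∀ t' ∈ H, t ≠ t' →
    t.1 ≠ t'.1 ∧ t.1 ≠ t'.2.2 ∧ t.2.2 ≠ t'.1 ∧ t.2.2 ≠ t'.2.2

/-- Hop matching number. -/
def hopMatchingNum (G : SimpleGraph (Fin n)) : ℕ :=
  sSup {k | ∃ H : Finset (Fin n × Fin n × Fin n), IsHopMatching G H ∧ H.card = k}

def frh (G : SimpleGraph (Fin n)) (p : Fin n → ℝ) : ℝ :=
  (∑ i, p i) + (∑ i, (1 - p i) * ∏ j ∈ N2 G i, (1 - p j)) +
  ∑ i, (1 - p i) * (1 - (1 - p i) * ∏ j ∈ N2 G i, (1 - p j)) *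
    ∏ j ∈ Nbr G i, (p j + (1 - p j) * ∏ k ∈ N2 G j, (1 - p k))

def f2sr (G : SimpleGraph (Fin n)) (p : Fin n → ℝ) : ℝ :=
  (∑ i, p i) + (∑ i, (1 - p i) * ∏ j ∈ N2 G i, (1 - p j)) +
  ∑ i, (1 - p i) * (1 - (1 - p i) * ∏ j ∈ N2 G i, (1 - p j)) *
    ∏ j ∈ N2 G i, (p j + (1 - p j) * ∏ k ∈ N2 G j, (1 - p k))

def ZSet (G : SimpleGraph (Fin n)) (X : Finset (Fin n)) : Finset (Fin n) :=
  Finset.univ.filter (fun i => i ∉ X ∧ N2 G i ∩ X = ∅)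

def YSet (G : SimpleGraph (Fin n)) (X : Finset (Fin n)) : Finset (Fin n) :=
  Finset.univ.filter (fun i => i ∉ X ∪ ZSet G X ∧ Nbr G i ⊆ X ∪ ZSet G X)

def DSet (G : SimpleGraph (Fin n)) (X : Finset (Fin n)) : Finset (Fin n) :=
  X ∪ ZSet G X ∪ YSet G X

/-!
Select every vertex independently with probability `p = ln δ / δ`. The expected size of the
selection is `p n`, and the expected number of vertices with no selected vertex at distance two
is at most `n (1 - p) ^ δ ≤ n e ^ (-p δ) = n / δ`. Adding, for each such vertex, one vertex at
distance two from it gives a two-step dominating set, of size at most `(ln δ + 1) / δ · n` for a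
selection not exceeding the expectation. Only `|N₂(v)| ≥ δ` is used, so this is the
hitting-set bound for any family of sets with at least `δ` elements each.
-/

section BernoulliSelection

variable {α : Type*} [Fintype α]

/-- The probability of the selection `f` when every element is selected independently with
probability `p`. -/
def bernoulliWeight (p : ℝ) (f : α → Bool) : ℝ := ∏ a, if f a then p else 1 - p

theorem bernoulliWeight_nonneg {p : ℝ} (hp₀ : 0 ≤ p) (hp₁ : p ≤ 1) (f : α → Bool) :
    0 ≤ bernoulliWeight p f :=
  Finset.prod_nonneg fun a _ => by split <;> linarith

variable [DecidableEq α]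

theorem sum_bernoulliWeight_mul_indicator_forall (p : ℝ) (P : α → Bool → Prop) :
    ∑ f, bernoulliWeight p f * (if ∀ a, P a (f a) then 1 else 0) =
      ∏ a, (p * (if P a true then 1 else 0) + (1 - p) * (if P a false then 1 else 0)) := by
  simp_rw [bernoulliWeight, ← Fintype.prod_boole, ← Finset.prod_mul_distrib]
  rw [← Fintype.prod_sum fun a (b : Bool) =>
    (if b then p else 1 - p) * if P a b then (1 : ℝ) else 0]
  simp only [Fintype.sum_bool, if_true, Bool.false_eq_true, if_false]

theorem sum_bernoulliWeight (p : ℝ) : ∑ f : α → Bool, bernoulliWeight p f = 1 := by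
  simpa using sum_bernoulliWeight_mul_indicator_forall p fun _ _ => True

theorem sum_bernoulliWeight_mul_indicator_apply (p : ℝ) (a₀ : α) :
    ∑ f, bernoulliWeight p f * (if f a₀ then 1 else 0) = p := by
  convert sum_bernoulliWeight_mul_indicator_forall p fun a b => a = a₀ → b = true using 1
  · simp
  · rw [Finset.prod_eq_single a₀ (fun a _ ha => by simp [ha]) (by simp)]
    simp

theorem sum_bernoulliWeight_mul_indicator_avoid (p : ℝ) (A : Finset α) :
    ∑ f, bernoulliWeight p f * (if ∀ a ∈ A, f a = false then 1 else 0) = (1 - p) ^ A.card := by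
  convert sum_bernoulliWeight_mul_indicator_forall p fun a b => a ∈ A → b = false using 1
  · simp
  · rw [← Finset.prod_const, ← Fintype.prod_ite_mem]
    refine Finset.prod_congr rfl fun a _ => ?_
    by_cases ha : a ∈ A <;> simp [ha]

end BernoulliSelection

theorem exists_le_sum_mul_of_sum_eq_one {ι : Type*} [Fintype ι] [Nonempty ι] {w : ι → ℝ}
    (hw₀ : ∀ i, 0 ≤ w i) (hw₁ : ∑ i, w i = 1) (F : ι → ℝ) : ∃ i, F i ≤ ∑ j, w j * F j := by
  obtain ⟨i, -, hi⟩ := Finset.exists_min_image Finset.univ F Finset.univ_nonempty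
  refine ⟨i, ?_⟩
  calc F i = ∑ j, w j * F i := by rw [← Finset.sum_mul, hw₁, one_mul]
    _ ≤ ∑ j, w j * F j :=
      Finset.sum_le_sum fun j _ => mul_le_mul_of_nonneg_left (hi j (Finset.mem_univ j)) (hw₀ j)

theorem log_div_self_mem_Icc {δ : ℕ} (hδ : 1 ≤ δ) :
    0 ≤ Real.log δ / δ ∧ Real.log δ / δ ≤ 1 := by
  have hδ' : (1 : ℝ) ≤ δ := by exact_mod_cast hδ
  exact ⟨div_nonneg (Real.log_nonneg hδ') (by positivity),
    div_le_one_of_le₀ (Real.log_le_self (by positivity)) (by positivity)⟩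

theorem one_sub_log_div_self_pow_le_inv {δ k : ℕ} (hδ : 1 ≤ δ) (hk : δ ≤ k) :
    (1 - Real.log δ / δ) ^ k ≤ (δ : ℝ)⁻¹ := by
  obtain ⟨hp₀, hp₁⟩ := log_div_self_mem_Icc hδ
  have hδ₀ : (0 : ℝ) < δ := by exact_mod_cast hδ
  calc (1 - Real.log δ / δ) ^ k ≤ (1 - Real.log δ / δ) ^ δ :=
        pow_le_pow_of_le_one (by linarith) (by linarith) hk
    _ ≤ Real.exp (-(Real.log δ / δ)) ^ δ :=
        pow_le_pow_left₀ (by linarith) (Real.one_sub_le_exp_neg _) δ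
    _ = (δ : ℝ)⁻¹ := by
        rw [← Real.exp_nat_mul, mul_neg, mul_div_cancel₀ _ hδ₀.ne', Real.exp_neg,
          Real.exp_log hδ₀]

section HittingSet

variable {α ι : Type*} [DecidableEq α] [Fintype ι]

theorem exists_hitting_set_card_le_card_add_card_disjoint (N : ι → Finset α)
    (hN : ∀ i, (N i).Nonempty) (X : Finset α) :
    ∃ S : Finset α, (∀ i, (N i ∩ S).Nonempty) ∧ S.card ≤ X.card + #{i | Disjoint (N i) X} := by
  choose pick hpick using hN
  refine ⟨X ∪ Finset.image pick {i | Disjoint (N i) X}, fun i => ?_, ?_⟩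
  · by_cases hi : Disjoint (N i) X
    · exact ⟨pick i, Finset.mem_inter.2 ⟨hpick i, Finset.mem_union_right _ <|
        Finset.mem_image_of_mem pick (by simpa using hi)⟩⟩
    · obtain ⟨a, haN, haX⟩ := Finset.not_disjoint_iff.1 hi
      exact ⟨a, Finset.mem_inter.2 ⟨haN, Finset.mem_union_left _ haX⟩⟩
  · exact (Finset.card_union_le _ _).trans (Nat.add_le_add_left Finset.card_image_le _)

variable [Fintype α]

theorem exists_card_add_card_disjoint_le (N : ι → Finset α) {p : ℝ} (hp₀ : 0 ≤ p) (hp₁ : p ≤ 1) :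
    ∃ X : Finset α, (X.card : ℝ) + #{i | Disjoint (N i) X} ≤
      p * Fintype.card α + ∑ i, (1 - p) ^ (N i).card := by
  let X : (α → Bool) → Finset α := fun f => {a | f a}
  have hdisj : ∀ f i, Disjoint (N i) (X f) ↔ ∀ a ∈ N i, f a = false := by
    simp [X, Finset.disjoint_left]
  have hexp : ∑ f, bernoulliWeight p f * ((X f).card + #{i | Disjoint (N i) (X f)} : ℝ) =
      p * Fintype.card α + ∑ i, (1 - p) ^ (N i).card := by
    simp only [X, hdisj, Finset.card_filter, Nat.cast_sum, Nat.cast_ite, Nat.cast_one,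
      Nat.cast_zero, mul_add, Finset.mul_sum, Finset.sum_add_distrib]
    congr 1 <;> rw [Finset.sum_comm]
    · simp only [sum_bernoulliWeight_mul_indicator_apply, Finset.sum_const, Finset.card_univ,
        nsmul_eq_mul, mul_comm]
    · simp only [sum_bernoulliWeight_mul_indicator_avoid]
  obtain ⟨f, hf⟩ := exists_le_sum_mul_of_sum_eq_one (bernoulliWeight_nonneg hp₀ hp₁)
    (sum_bernoulliWeight p) fun f => ((X f).card + #{i | Disjoint (N i) (X f)} : ℝ)
  exact ⟨X f, hf.trans hexp.le⟩

theorem exists_hitting_set_card_le (N : ι → Finset α) {δ : ℕ} (hδ : 1 ≤ δ)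
    (hN : ∀ i, δ ≤ (N i).card) :
    ∃ S : Finset α, (∀ i, (N i ∩ S).Nonempty) ∧
      (S.card : ℝ) ≤ Real.log δ / δ * Fintype.card α + Fintype.card ι / δ := by
  obtain ⟨hp₀, hp₁⟩ := log_div_self_mem_Icc hδ
  obtain ⟨X, hX⟩ := exists_card_add_card_disjoint_le N hp₀ hp₁
  obtain ⟨S, hS, hcard⟩ := exists_hitting_set_card_le_card_add_card_disjoint N
    (fun i => Finset.card_pos.1 (hδ.trans (hN i))) X
  refine ⟨S, hS, ?_⟩
  calc (S.card : ℝ) ≤ X.card + #{i | Disjoint (N i) X} := by exact_mod_cast hcard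
    _ ≤ Real.log δ / δ * Fintype.card α + ∑ i, (1 - Real.log δ / δ) ^ (N i).card := hX
    _ ≤ Real.log δ / δ * Fintype.card α + ∑ _i : ι, (δ : ℝ)⁻¹ := by
      gcongr with i
      exact one_sub_log_div_self_pow_le_inv hδ (hN i)
    _ = Real.log δ / δ * Fintype.card α + Fintype.card ι / δ := by simp [div_eq_mul_inv]

end HittingSet

theorem stmt2 {n : ℕ} (G : SimpleGraph (Fin n)) (hδh : 1 ≤ minHopDeg G) :
    (twoStepDomNum G : ℝ) ≤
      (Real.log (minHopDeg G) + 1) / (minHopDeg G) * n := by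
  have hhop : ∀ i, minHopDeg G ≤ (N2 G i).card := fun i => ciInf_le (OrderBot.bddBelow _) i
  obtain ⟨S, hS, hcard⟩ := exists_hitting_set_card_le (N2 G) hδh hhop
  have hdom : IsTwoStepDomSet G S := fun u => by
    obtain ⟨v, hv⟩ := hS u
    simp only [N2, Finset.mem_inter, Finset.mem_filter, Finset.mem_univ, true_and] at hv
    exact ⟨v, hv.2, hv.1⟩
  have hγ : twoStepDomNum G ≤ S.card := Nat.sInf_le ⟨S, hdom, rfl⟩
  calc (twoStepDomNum G : ℝ) ≤ S.card := by exact_mod_cast hγ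
    _ ≤ Real.log (minHopDeg G) / minHopDeg G * n + n / minHopDeg G := by simpa using hcard
    _ = (Real.log (minHopDeg G) + 1) / (minHopDeg G) * n := by ring
end
end

section
/- Let G be a graph on vertices {1,...,n}. If X ⊆ V, Z = {i ∉ X : N_2(i) ∩ X = ∅}, and Y = {i ∉ X ∪ Z : N(i) ⊆ X ∪ Z}, then D = X ∪ Z ∪ Y is a restrained hop dominating set of G. -/
open Finset

noncomputable section
open scoped Classical

variable {n : ℕ}

/-! A vertex outside `X ∪ Z` has, by the definition of `Z`, a vertex of `X` at distance 2,
and hop domination passes to supersets. A vertex `u` outside `X ∪ Z ∪ Y` has, since `u ∉ Y`, a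
neighbour `v` outside `X ∪ Z`; and `v ∉ Y` because its neighbour `u` lies outside `X ∪ Z`. -/

theorem IsHopDomSet.mono {G : SimpleGraph (Fin n)} {S T : Finset (Fin n)}
    (hS : IsHopDomSet G S) (hST : S ⊆ T) : IsHopDomSet G T := fun u hu => by
  obtain ⟨v, hvS, huv⟩ := hS u fun huS => hu (hST huS)
  exact ⟨v, hST hvS, huv⟩

theorem isHopDomSet_union_ZSet (G : SimpleGraph (Fin n)) (X : Finset (Fin n)) :
    IsHopDomSet G (X ∪ ZSet G X) := fun u hu => by
  have huX : u ∉ X := fun h => hu (mem_union_left _ h)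
  have huZ : u ∉ ZSet G X := fun h => hu (mem_union_right _ h)
  have : (N2 G u ∩ X).Nonempty := by
    simpa [ZSet, huX, nonempty_iff_ne_empty] using huZ
  obtain ⟨v, hv⟩ := this
  obtain ⟨hvN2, hvX⟩ := mem_inter.mp hv
  exact ⟨v, mem_union_left _ hvX, (mem_filter.mp hvN2).2⟩

theorem exists_adj_notMem_union_filter_nbr_subset (G : SimpleGraph (Fin n))
    (S : Finset (Fin n)) {u : Fin n}
    (hu : u ∉ S ∪ univ.filter (fun i => i ∉ S ∧ Nbr G i ⊆ S)) :
    ∃ v, v ∉ S ∪ univ.filter (fun i => i ∉ S ∧ Nbr G i ⊆ S) ∧ G.Adj u v := by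
  simp only [mem_union, mem_filter, mem_univ, true_and, not_or, not_and] at hu
  obtain ⟨huS, hNbr⟩ := hu
  obtain ⟨v, hvN, hvS⟩ := not_subset.mp (hNbr huS)
  have huv : G.Adj u v := (mem_filter.mp hvN).2
  refine ⟨v, ?_, huv⟩
  simp only [mem_union, mem_filter, mem_univ, true_and, not_or, not_and]
  exact ⟨hvS, fun _ hsub => huS (hsub (mem_filter.mpr ⟨mem_univ _, huv.symm⟩))⟩

theorem stmt7 {n : ℕ} (G : SimpleGraph (Fin n)) (X Z Y : Finset (Fin n))
    (hZ : Z = Finset.univ.filter (fun i => i ∉ X ∧ N2 G i ∩ X = ∅))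
    (hY : Y = Finset.univ.filter (fun i => i ∉ X ∪ Z ∧ Nbr G i ⊆ X ∪ Z)) :
    IsRestrainedHopDomSet G (X ∪ Z ∪ Y) := by
  subst hZ hY
  exact ⟨(isHopDomSet_union_ZSet G X).mono subset_union_left,
    fun _ hu => exists_adj_notMem_union_filter_nbr_subset G _ hu⟩
end
end
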